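/- Let G be an arbitrary graph, H an inclusion-minimal cograph completion of G, and x a new vertex with neighbourhood N(x) ⊆ V(G). If M ⊆ V(G) \ N(x) is inclusion-minimal among sets such that adding x adjacent to N(x) ∪ M to H yields a cograph, then the resulting graph on V(G) ∪ {x} is an inclusion-minimal cograph completion of G + x. -/
import Mathlib


universe u

def IsCograph {α : Type*} (G : SimpleGraph α) : Prop :=
  ¬ ∃ f : Fin 4 → α, Function.Injective f ∧
      ∀ i j : Fin 4, G.Adj (f i) (f j) ↔ (i.val + 1 = j.val ∨ j.val + 1 = i.val)

/-- The graph obtained from `H` by adding a new vertex (`none`) adjacent exactly to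
the vertices of `N` (viewed inside `Option V`). -/
def addVertex {V : Type u} (H : SimpleGraph V) (N : Set V) : SimpleGraph (Option V) :=
  SimpleGraph.fromRel (fun a b =>
    match a, b with
    | some u, some v => H.Adj u v
    | none, some v => v ∈ N
    | _, _ => False)

/-- `H` is an inclusion-minimal cograph completion of `G`. -/
def IsMinCographCompletion {α : Type u} (G H : SimpleGraph α) : Prop :=
  G ≤ H ∧ IsCograph H ∧ ∀ K : SimpleGraph α, G ≤ K → K ≤ H → IsCograph K → K = H


lemma av_ss {V : Type u} (H : SimpleGraph V) (N : Set V) (u v : V) :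
    (addVertex H N).Adj (some u) (some v) ↔ H.Adj u v := by
  simp only [addVertex, SimpleGraph.fromRel_adj]
  constructor
  · rintro ⟨hne, h | h⟩
    · exact h
    · exact h.symm
  · intro h
    exact ⟨by simpa using H.ne_of_adj h, Or.inl h⟩

lemma av_ns {V : Type u} (H : SimpleGraph V) (N : Set V) (v : V) :
    (addVertex H N).Adj none (some v) ↔ v ∈ N := by
  simp only [addVertex, SimpleGraph.fromRel_adj]
  constructor
  · rintro ⟨hne, h | h⟩
    · exact h
    · exact h.elim
  · intro h
    exact ⟨by simp, Or.inl h⟩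

theorem stmt_5 {V : Type u} (G H : SimpleGraph V)
    (hmin : IsMinCographCompletion G H)
    (Nx M : Set V) (hM : M ⊆ Nxᶜ)
    (hcog : IsCograph (addVertex H (Nx ∪ M)))
    (hMmin : ∀ M' ⊆ M, IsCograph (addVertex H (Nx ∪ M')) → M' = M) :
    IsMinCographCompletion (addVertex G Nx) (addVertex H (Nx ∪ M)) := by
  obtain ⟨hGH, hHcog, hHmin⟩ := hmin
  refine ⟨?_, hcog, ?_⟩
  · intro a b hab
    match a, b with
    | some u, some v =>
        exact (av_ss H (Nx ∪ M) u v).mpr (hGH ((av_ss G Nx u v).mp hab))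
    | none, some v =>
        exact (av_ns H (Nx ∪ M) v).mpr (Set.mem_union_left _ ((av_ns G Nx v).mp hab))
    | some v, none =>
        exact ((av_ns H (Nx ∪ M) v).mpr (Set.mem_union_left _ ((av_ns G Nx v).mp hab.symm))).symm
    | none, none => exact absurd hab (addVertex G Nx).irrefl
  · intro K hGK hKH hKcog
    set K' : SimpleGraph V := SimpleGraph.comap some K with hK'def
    have hK'cog : IsCograph K' := by
      rintro ⟨f, hinj, hiff⟩
      exact hKcog ⟨some ∘ f, (Option.some_injective _).comp hinj, fun i j => hiff i j⟩
    have hGK' : G ≤ K' := fun {u v} h => hGK ((av_ss G Nx u v).mpr h)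
    have hK'H : K' ≤ H := fun {u v} h => (av_ss H (Nx ∪ M) u v).mp (hKH h)
    have hK'eq : K' = H := hHmin K' hGK' hK'H hK'cog
    set M'' : Set V := {v | v ∈ M ∧ K.Adj none (some v)} with hM''def
    have hKeq : K = addVertex H (Nx ∪ M'') := by
      ext a b
      match a, b with
      | some u, some v =>
          rw [av_ss]
          have : K.Adj (some u) (some v) ↔ K'.Adj u v := Iff.rfl
          rw [this, hK'eq]
      | none, some v =>
          rw [av_ns]
          constructor
          · intro h
            rcases (av_ns H (Nx ∪ M) v).mp (hKH h) with hv | hv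
            · exact Set.mem_union_left _ hv
            · exact Set.mem_union_right _ ⟨hv, h⟩
          · rintro (hv | hv)
            · exact hGK ((av_ns G Nx v).mpr hv)
            · exact hv.2
      | some v, none =>
          rw [K.adj_comm, (addVertex H (Nx ∪ M'')).adj_comm, av_ns]
          constructor
          · intro h
            rcases (av_ns H (Nx ∪ M) v).mp (hKH h) with hv | hv
            · exact Set.mem_union_left _ hv
            · exact Set.mem_union_right _ ⟨hv, h⟩
          · rintro (hv | hv)
            · exact hGK ((av_ns G Nx v).mpr hv)
            · exact hv.2
      | none, none =>
          simp only [K.irrefl, (addVertex H (Nx ∪ M'')).irrefl]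
    have hMM : M'' = M := hMmin M'' (fun v h => h.1) (hKeq ▸ hKcog)
    rw [hKeq, hMM]
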